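/- Let u ≥ v ≥ 1 be integers and n a natural number. If v ≥ 2, then μ(𝒯^{(u,v)}(2n+2)) equals the (1,1) entry of the matrix (R_v L_u)^{n+1}. If v = 1, then μ(𝒯^{(u,1)}(2n+2)) equals the (2,1) entry of the matrix L_u (L_u R_1)^n L_u. -/

import Mathlib

/-!
Prepending `L_u` to a word replaces the second row `r₁` of its product by `u • r₀ + r₁`, and
prepending `R_v` replaces the first row `r₀` by `r₀ + v • r₁`; the other row is kept. So for the
words of length `m` that begin with `L_u`, the second row is bounded by `boundL u v m` and the first
by `boundR u v (m - 1)`, and symmetrically for `R_v`; these bounds obey a max-plus recursion. For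
`u, v ≥ 2` the maximum in it is always the alternating branch and the bounds at even length are
`((R_v L_u)^k)₀₀`; for `v = 1` the extremal words begin with `L_u L_u`. The bounds are attained by
`(R_v L_u)^(n+1)` and by `L_u L_u (R_1 L_u)^n = L_u (L_u R_1)^n L_u`.
-/

open Matrix Finset

def Lm (u : ℕ) : Matrix (Fin 2) (Fin 2) ℕ := !![1, 0; u, 1]
def Rm (v : ℕ) : Matrix (Fin 2) (Fin 2) ℕ := !![1, v; 0, 1]

/-- The product of the matrices corresponding to a word: `false ↦ L_u`, `true ↦ R_v`. -/
def wordProd (u v : ℕ) (w : List Bool) : Matrix (Fin 2) (Fin 2) ℕ :=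
  (w.map (fun b => if b then Rm v else Lm u)).prod

/-- μ of a matrix: maximum of the four entries. -/
def matMax (M : Matrix (Fin 2) (Fin 2) ℕ) : ℕ :=
  max (max (M 0 0) (M 0 1)) (max (M 1 0) (M 1 1))

/-- μ(𝒯^{(u,v)}(I₂;n)): maximum of μ over all products of exactly n matrices each L_u or R_v. -/
def levelMax (u v n : ℕ) : ℕ :=
  Finset.univ.sup (fun w : Fin n → Bool => matMax (wordProd u v (List.ofFn w)))

lemma wordProd_cons (u v : ℕ) (b : Bool) (w : List Bool) :
    wordProd u v (b :: w) = (if b then Rm v else Lm u) * wordProd u v w := by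
  simp [wordProd]

section RowOperations

variable (M : Matrix (Fin 2) (Fin 2) ℕ) (j : Fin 2)

lemma Lm_mul_apply_zero (u : ℕ) : (Lm u * M) 0 j = M 0 j := by
  simp [Lm, mul_apply, Fin.sum_univ_two]

lemma Lm_mul_apply_one (u : ℕ) : (Lm u * M) 1 j = u * M 0 j + M 1 j := by
  simp [Lm, mul_apply, Fin.sum_univ_two]

lemma Rm_mul_apply_zero (v : ℕ) : (Rm v * M) 0 j = M 0 j + v * M 1 j := by
  simp [Rm, mul_apply, Fin.sum_univ_two]

lemma Rm_mul_apply_one (v : ℕ) : (Rm v * M) 1 j = M 1 j := by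
  simp [Rm, mul_apply, Fin.sum_univ_two]

end RowOperations

lemma matMax_le {M : Matrix (Fin 2) (Fin 2) ℕ} {c : ℕ} (h : ∀ i j, M i j ≤ c) : matMax M ≤ c :=
  max_le (max_le (h 0 0) (h 0 1)) (max_le (h 1 0) (h 1 1))

lemma le_matMax (M : Matrix (Fin 2) (Fin 2) ℕ) (i j : Fin 2) : M i j ≤ matMax M := by
  fin_cases i <;> fin_cases j <;> simp [matMax]

lemma apply_le_levelMax (u v : ℕ) (w : List Bool) (i j : Fin 2) :
    wordProd u v w i j ≤ levelMax u v w.length := by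
  have h := Finset.le_sup (f := fun f : Fin w.length → Bool => matMax (wordProd u v (List.ofFn f)))
    (Finset.mem_univ w.get)
  rw [List.ofFn_get] at h
  exact (le_matMax _ i j).trans h

def bounds (u v : ℕ) : ℕ → ℕ × ℕ
  | 0 => (1, 1)
  | 1 => (u, v)
  | m + 2 =>
    let (a, b) := bounds u v m
    let (a', b') := bounds u v (m + 1)
    (max (a' + u * b) (u * b' + a), max (b' + v * a) (v * a' + b))

def boundL (u v m : ℕ) : ℕ := (bounds u v m).1

def boundR (u v m : ℕ) : ℕ := (bounds u v m).2

lemma boundL_add_two (u v m : ℕ) : boundL u v (m + 2) =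
    max (boundL u v (m + 1) + u * boundR u v m) (u * boundR u v (m + 1) + boundL u v m) :=
  rfl

lemma boundR_add_two (u v m : ℕ) : boundR u v (m + 2) =
    max (boundR u v (m + 1) + v * boundL u v m) (v * boundL u v (m + 1) + boundR u v m) :=
  rfl

section UpperBound

variable {u v : ℕ}

lemma boundL_le_succ (hu : 1 ≤ u) : ∀ m, boundL u v m ≤ boundL u v (m + 1)
  | 0 => hu
  | m + 1 => by rw [boundL_add_two]; exact le_max_of_le_left (Nat.le_add_right _ _)

lemma boundR_le_succ (hv : 1 ≤ v) : ∀ m, boundR u v m ≤ boundR u v (m + 1)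
  | 0 => hv
  | m + 1 => by rw [boundR_add_two]; exact le_max_of_le_left (Nat.le_add_right _ _)

variable (hu : 1 ≤ u) (hv : 1 ≤ v)
include hu hv

lemma wordProd_cons_apply_le (t : List Bool) (j : Fin 2) :
    (wordProd u v (false :: t) 1 j ≤ boundL u v (t.length + 1) ∧
      wordProd u v (false :: t) 0 j ≤ boundR u v t.length) ∧
    (wordProd u v (true :: t) 0 j ≤ boundR u v (t.length + 1) ∧
      wordProd u v (true :: t) 1 j ≤ boundL u v t.length) := by
  induction t with
  | nil => fin_cases j <;> simp [wordProd, Lm, Rm, boundL, boundR, bounds, hu, hv]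
  | cons c t ih =>
    obtain ⟨⟨hL1, hL0⟩, hR0, hR1⟩ := ih
    rw [wordProd_cons u v false, wordProd_cons u v true, if_neg Bool.false_ne_true, if_pos rfl,
      Lm_mul_apply_zero, Lm_mul_apply_one, Rm_mul_apply_zero, Rm_mul_apply_one,
      List.length_cons, boundL_add_two, boundR_add_two]
    cases c
    · refine ⟨⟨le_max_of_le_left ?_, hL0.trans (boundR_le_succ hv _)⟩, le_max_of_le_right ?_, hL1⟩
      all_goals rw [add_comm]; gcongr
    · exact ⟨⟨le_max_of_le_right (by gcongr), hR0⟩, le_max_of_le_left (by gcongr),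
        hR1.trans (boundL_le_succ hu _)⟩

lemma wordProd_apply_le_max_bound {w : List Bool} (hw : w ≠ []) (i j : Fin 2) :
    wordProd u v w i j ≤ max (boundL u v w.length) (boundR u v w.length) := by
  obtain ⟨b, t, rfl⟩ := List.exists_cons_of_ne_nil hw
  obtain ⟨⟨hL1, hL0⟩, hR0, hR1⟩ := wordProd_cons_apply_le hu hv t j
  cases b <;> fin_cases i
  · exact le_max_of_le_right (hL0.trans (boundR_le_succ hv _))
  · exact le_max_of_le_left hL1
  · exact le_max_of_le_right hR0
  · exact le_max_of_le_left (hR1.trans (boundL_le_succ hu _))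

lemma levelMax_le_max_bound {m : ℕ} (hm : m ≠ 0) :
    levelMax u v m ≤ max (boundL u v m) (boundR u v m) := by
  refine Finset.sup_le fun w _ => ?_
  have hw : List.ofFn w ≠ [] := by simpa using hm
  simpa using matMax_le (wordProd_apply_le_max_bound hu hv hw)

end UpperBound

def rlDiagSum (u v : ℕ) : ℕ → ℕ × ℕ
  | 0 => (1, 0)
  | k + 1 =>
    let (x, s) := rlDiagSum u v k
    (x + u * v * (s + x), s + x)

def rlDiag (u v k : ℕ) : ℕ := (rlDiagSum u v k).1

def rlSum (u v k : ℕ) : ℕ := (rlDiagSum u v k).2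

lemma rlSum_succ (u v k : ℕ) : rlSum u v (k + 1) = rlSum u v k + rlDiag u v k :=
  rfl

lemma rlDiag_succ (u v k : ℕ) : rlDiag u v (k + 1) = rlDiag u v k + u * v * rlSum u v (k + 1) :=
  rfl

lemma Rm_mul_Lm_pow_apply (u v k : ℕ) :
    ((Rm v * Lm u) ^ k) 0 0 = rlDiag u v k ∧ ((Rm v * Lm u) ^ k) 1 0 = u * rlSum u v k := by
  induction k with
  | zero => simp [rlDiag, rlSum, rlDiagSum]
  | succ k ih =>
    rw [pow_succ', mul_assoc, Rm_mul_apply_zero, Rm_mul_apply_one, Lm_mul_apply_zero,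
      Lm_mul_apply_one, ih.1, ih.2, rlDiag_succ, rlSum_succ]
    constructor <;> ring

lemma bounds_closedForm_of_two_le {u v : ℕ} (hu : 2 ≤ u) (hv : 2 ≤ v) (k : ℕ) :
    boundL u v (2 * k) = rlDiag u v k ∧ boundR u v (2 * k) = rlDiag u v k ∧
      boundL u v (2 * k + 1) = u * rlSum u v (k + 1) ∧
      boundR u v (2 * k + 1) = v * rlSum u v (k + 1) := by
  induction k with
  | zero => simp [boundL, boundR, bounds, rlDiag, rlSum, rlDiagSum]
  | succ k ih =>
    obtain ⟨hL0, hR0, hL1, hR1⟩ := ih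
    have hx : rlDiag u v k ≤ rlSum u v (k + 1) := by rw [rlSum_succ]; omega
    have hL2 : boundL u v (2 * k + 2) = rlDiag u v (k + 1) := by
      rw [boundL_add_two, hL0, hR0, hL1, hR1, rlDiag_succ, max_eq_right (by nlinarith)]
      ring
    have hR2 : boundR u v (2 * k + 2) = rlDiag u v (k + 1) := by
      rw [boundR_add_two, hL0, hR0, hL1, hR1, rlDiag_succ, max_eq_right (by nlinarith)]
      ring
    have hx' : u * v * rlSum u v (k + 1) ≤ rlDiag u v (k + 1) := by rw [rlDiag_succ]; omega
    have hL3 : boundL u v (2 * k + 3) = u * rlSum u v (k + 2) := by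
      rw [boundL_add_two, hL2, hR2, hL1, hR1, rlSum_succ _ _ (k + 1), max_eq_right (by nlinarith)]
      ring
    have hR3 : boundR u v (2 * k + 3) = v * rlSum u v (k + 2) := by
      rw [boundR_add_two, hL2, hR2, hL1, hR1, rlSum_succ _ _ (k + 1), max_eq_right (by nlinarith)]
      ring
    exact ⟨hL2, hR2, hL3, hR3⟩

lemma bounds_closedForm_one {u : ℕ} (hu : 1 ≤ u) (k : ℕ) :
    boundL u 1 (2 * k + 1) = u * rlSum u 1 (k + 1) ∧
      boundL u 1 (2 * k + 2) = u * (rlDiag u 1 k + rlSum u 1 (k + 1)) ∧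
      boundR u 1 (2 * k + 1) + u * rlDiag u 1 k = rlDiag u 1 (k + 1) ∧
      boundR u 1 (2 * k + 2) = rlDiag u 1 (k + 1) := by
  induction k with
  | zero =>
    simp only [boundL, boundR, bounds, rlDiag, rlSum, rlDiagSum]
    omega
  | succ k ih =>
    obtain ⟨hL1, hL2, hR1, hR2⟩ := ih
    have hx : rlDiag u 1 (k + 1) = rlDiag u 1 k + u * rlSum u 1 (k + 1) := by
      rw [rlDiag_succ, mul_one]
    have hx' : rlDiag u 1 (k + 2) = rlDiag u 1 (k + 1) + u * rlSum u 1 (k + 2) := by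
      rw [rlDiag_succ, mul_one]
    have hs : rlSum u 1 (k + 2) = rlSum u 1 (k + 1) + rlDiag u 1 (k + 1) := rlSum_succ u 1 (k + 1)
    have hB1 : rlDiag u 1 k + boundR u 1 (2 * k + 1) ≤ rlDiag u 1 (k + 1) := by nlinarith
    have hL3 : boundL u 1 (2 * k + 3) = u * rlSum u 1 (k + 2) := by
      rw [boundL_add_two, hL1, hL2, hR2, hs,
        max_eq_right (by nlinarith [Nat.mul_le_mul_left u hB1])]
      ring
    have hR3 : boundR u 1 (2 * k + 3) = rlDiag u 1 (k + 1) + u * rlSum u 1 (k + 1) := by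
      rw [boundR_add_two, hL1, hL2, hR2, max_eq_left (by nlinarith)]
      ring
    have hL4 : boundL u 1 (2 * k + 4) = u * (rlDiag u 1 (k + 1) + rlSum u 1 (k + 2)) := by
      rw [boundL_add_two, hL3, hR3, hL2, hR2, hs, max_eq_left (by nlinarith)]
      ring
    have hR4 : boundR u 1 (2 * k + 4) = rlDiag u 1 (k + 2) := by
      rw [boundR_add_two, hL3, hR3, hL2, hR2, hx', hs, max_eq_right (by nlinarith)]
      ring
    have hR3' : boundR u 1 (2 * k + 3) + u * rlDiag u 1 (k + 1) = rlDiag u 1 (k + 2) := by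
      rw [hR3, hx', hs]
      ring
    exact ⟨hL3, hL4, hR3', hR4⟩

def alternatingWord (k : ℕ) : List Bool := (List.replicate k [true, false]).flatten

lemma length_alternatingWord (k : ℕ) : (alternatingWord k).length = 2 * k := by
  simp [alternatingWord, mul_comm]

lemma wordProd_alternatingWord (u v k : ℕ) :
    wordProd u v (alternatingWord k) = (Rm v * Lm u) ^ k := by
  simp [alternatingWord, wordProd]

theorem levelMax_two_mul_add_two_of_two_le {u v : ℕ} (hu : 2 ≤ u) (hv : 2 ≤ v) (n : ℕ) :
    levelMax u v (2 * n + 2) = ((Rm v * Lm u) ^ (n + 1)) 0 0 := by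
  obtain ⟨hL, hR, -, -⟩ := bounds_closedForm_of_two_le hu hv (n + 1)
  apply le_antisymm
  · calc levelMax u v (2 * n + 2) ≤ max (boundL u v (2 * (n + 1))) (boundR u v (2 * (n + 1))) :=
          levelMax_le_max_bound (by omega) (by omega) (by omega)
      _ = ((Rm v * Lm u) ^ (n + 1)) 0 0 := by
          rw [hL, hR, max_self, (Rm_mul_Lm_pow_apply u v _).1]
  · simpa only [wordProd_alternatingWord, length_alternatingWord, mul_add_one] using
      apply_le_levelMax u v (alternatingWord (n + 1)) 0 0

theorem levelMax_two_mul_add_two_one {u : ℕ} (hu : 1 ≤ u) (n : ℕ) :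
    levelMax u 1 (2 * n + 2) = (Lm u * (Lm u * Rm 1) ^ n * Lm u) 1 0 := by
  obtain ⟨-, hL, -, hR⟩ := bounds_closedForm_one hu n
  have hword : Lm u * (Lm u * Rm 1) ^ n * Lm u =
      wordProd u 1 (false :: false :: alternatingWord n) := by
    simp [wordProd_cons, wordProd_alternatingWord, mul_assoc, mul_pow_mul]
  have hvalue : (Lm u * (Lm u * Rm 1) ^ n * Lm u) 1 0 =
      u * (rlDiag u 1 n + rlSum u 1 (n + 1)) := by
    rw [mul_assoc, mul_pow_mul, Lm_mul_apply_one, Lm_mul_apply_zero, Lm_mul_apply_one,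
      (Rm_mul_Lm_pow_apply u 1 n).1, (Rm_mul_Lm_pow_apply u 1 n).2, rlSum_succ]
    ring
  have hRL : rlDiag u 1 (n + 1) ≤ u * (rlDiag u 1 n + rlSum u 1 (n + 1)) := by
    rw [rlDiag_succ, mul_one, mul_add]
    exact Nat.add_le_add_right (Nat.le_mul_of_pos_left _ hu) _
  apply le_antisymm
  · calc levelMax u 1 (2 * n + 2) ≤ max (boundL u 1 (2 * n + 2)) (boundR u 1 (2 * n + 2)) :=
          levelMax_le_max_bound hu le_rfl (by omega)
      _ = (Lm u * (Lm u * Rm 1) ^ n * Lm u) 1 0 := by rw [hL, hR, hvalue, max_eq_left hRL]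
  · rw [hword]
    simpa only [List.length_cons, length_alternatingWord] using
      apply_le_levelMax u 1 (false :: false :: alternatingWord n) 1 0

theorem stmt4_general (u v : ℕ) (huv : v ≤ u) (n : ℕ) :
    (2 ≤ v → levelMax u v (2 * n + 2) = ((Rm v * Lm u) ^ (n + 1)) 0 0) ∧
    (v = 1 → levelMax u 1 (2 * n + 2) = (Lm u * (Lm u * Rm 1) ^ n * Lm u) 1 0) :=
  ⟨fun hv => levelMax_two_mul_add_two_of_two_le (hv.trans huv) hv n,
    fun hv => levelMax_two_mul_add_two_one (hv ▸ huv) n⟩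

theorem stmt4 (u v : ℕ) (hv : 1 ≤ v) (huv : v ≤ u) (n : ℕ) :
    (2 ≤ v → levelMax u v (2 * n + 2) = ((Rm v * Lm u) ^ (n + 1)) 0 0) ∧
    (v = 1 → levelMax u 1 (2 * n + 2) = (Lm u * (Lm u * Rm 1) ^ n * Lm u) 1 0) :=
  stmt4_general u v huv n
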